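/- For all integers n ≥ 20604 and all divisors r of n with 4 < r < n, setting b' = 2/√π and c₀ = log₉(48·24^{1/3}), one has (b'·(n/r)/√(log₂(n/r)))·((1+c₀)·log₂ r − (log₂ 24)/3) + 2·(n/r)/√(log₂(n/r)) ≤ 2n/√(log₂ n). -/

import Mathlib

lemma logb_le_of_pow {r p q : ℕ} (hq : 0 < q) (hr : 0 < r) (h : r ^ q ≤ 2 ^ p) :
    Real.logb 2 r ≤ (p : ℝ) / q := by
  rw [le_div_iff₀ (by positivity)]
  have h1 : Real.logb 2 ((r : ℝ) ^ q) ≤ Real.logb 2 ((2 : ℝ) ^ p) := by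
    apply Real.logb_le_logb_of_le one_lt_two (by positivity)
    exact_mod_cast h
  rw [Real.logb_pow, Real.logb_pow, Real.logb_self_eq_one one_lt_two] at h1
  linarith [h1]

lemma le_logb_of_pow {n p q : ℕ} (hq : 0 < q) (hn : 0 < n) (h : 2 ^ p ≤ n ^ q) :
    (p : ℝ) / q ≤ Real.logb 2 n := by
  rw [div_le_iff₀ (by positivity)]
  have h1 : Real.logb 2 ((2 : ℝ) ^ p) ≤ Real.logb 2 ((n : ℝ) ^ q) := by
    apply Real.logb_le_logb_of_le one_lt_two (by positivity)
    exact_mod_cast h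
  rw [Real.logb_pow, Real.logb_pow, Real.logb_self_eq_one one_lt_two] at h1
  linarith [h1]

lemma sqrt_pi_lb : (1.7715 : ℝ) ≤ Real.sqrt Real.pi := by
  rw [show (1.7715:ℝ) = Real.sqrt (1.7715^2) by rw [Real.sqrt_sq]; norm_num]
  apply Real.sqrt_le_sqrt
  nlinarith [Real.pi_gt_d6]

lemma sqrt_pi_ub : Real.sqrt Real.pi ≤ 1.7725 := by
  rw [show (1.7725:ℝ) = Real.sqrt (1.7725^2) by rw [Real.sqrt_sq]; norm_num]
  apply Real.sqrt_le_sqrt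
  nlinarith [Real.pi_lt_d6]

lemma b_lb : (1.128 : ℝ) ≤ 2 / Real.sqrt Real.pi := by
  rw [le_div_iff₀ (by positivity)]
  nlinarith [sqrt_pi_ub]

lemma b_ub : 2 / Real.sqrt Real.pi ≤ 1.129 := by
  rw [div_le_iff₀ (by positivity)]
  nlinarith [sqrt_pi_lb]

lemma c0_ub : Real.logb 9 (48 * (24 : ℝ) ^ ((1 : ℝ) / 3)) ≤ 9 / 4 := by
  have h24 : Real.log ((24:ℝ) ^ ((1:ℝ)/3)) = (1/3) * Real.log 24 := Real.log_rpow (by norm_num) _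
  have hlog9 : 0 < Real.log 9 := Real.log_pos (by norm_num)
  rw [Real.logb, div_le_iff₀ hlog9, Real.log_mul (by norm_num) (by positivity), h24]
  have key : Real.log ((48:ℝ)^(12:ℕ) * 24^(4:ℕ)) ≤ Real.log ((9:ℝ)^(27:ℕ)) := by
    apply Real.log_le_log (by positivity)
    norm_num
  rw [Real.log_mul (by positivity) (by positivity), Real.log_pow, Real.log_pow, Real.log_pow] at key
  push_cast at key
  linarith

lemma c0_lb : (0:ℝ) ≤ Real.logb 9 (48 * (24 : ℝ) ^ ((1 : ℝ) / 3)) := by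
  apply Real.logb_nonneg (by norm_num)
  have : (1:ℝ) ≤ (24:ℝ) ^ ((1:ℝ)/3) := Real.one_le_rpow (by norm_num) (by norm_num)
  nlinarith

lemma c_lb : (4.58 : ℝ) ≤ Real.logb 2 24 := by
  have := le_logb_of_pow (n := 24) (p := 229) (q := 50) (by norm_num) (by norm_num) (by norm_num)
  norm_num at this ⊢
  linarith

lemma c_ub : Real.logb 2 24 ≤ 4.6 := by
  have := logb_le_of_pow (r := 24) (p := 23) (q := 5) (by norm_num) (by norm_num) (by norm_num)
  norm_num at this ⊢
  linarith

set_option maxHeartbeats 1000000 in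
lemma core (r : ℕ) (x y : ℝ) (hx : x = Real.logb 2 r) (hr : 5 ≤ r)
    (hy1 : 1 ≤ y) (hL : (14.3 : ℝ) ≤ x + y) :
    (3.67 * x + 0.28) ^ 2 * (x + y) ≤ 4 * (r : ℝ) ^ 2 * y := by
  have hr0 : (0:ℝ) < r := by positivity
  have hr1 : (1:ℝ) ≤ r := by exact_mod_cast (by omega : 1 ≤ r)
  have hx0 : 0 ≤ x := by rw [hx]; exact Real.logb_nonneg one_lt_two hr1
  rcases le_or_gt 24 r with h24 | h23
  · -- large r : analytic bound
    set s := Real.sqrt (Real.sqrt r) with hs_def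
    have hsr2 : s ^ 2 = Real.sqrt r := Real.sq_sqrt (Real.sqrt_nonneg _)
    have hsr : s ^ 4 = (r : ℝ) := by
      have h : (s ^ 2) ^ 2 = (r:ℝ) := by rw [hsr2]; exact Real.sq_sqrt (by positivity)
      nlinarith [h]
    have hs0 : 0 < s := by rw [hs_def]; positivity
    have hs : (2.213 : ℝ) ≤ s := by
      rw [hs_def]
      have h1 : (2.213:ℝ)^2 ≤ Real.sqrt r := by
        rw [show ((2.213:ℝ)^2) = Real.sqrt ((2.213^2)^2) by rw [Real.sqrt_sq]; norm_num]
        apply Real.sqrt_le_sqrt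
        have : (24:ℝ) ≤ (r:ℝ) := by exact_mod_cast h24
        nlinarith
      calc (2.213:ℝ) = Real.sqrt (2.213^2) := by rw [Real.sqrt_sq]; norm_num
        _ ≤ Real.sqrt (Real.sqrt r) := Real.sqrt_le_sqrt h1
    have hlogs : Real.log s ≤ 0.3678795 * s := by
      have h1 : Real.log (s / Real.exp 1) ≤ s / Real.exp 1 - 1 :=
        Real.log_le_sub_one_of_pos (by positivity)
      rw [Real.log_div (ne_of_gt hs0) (Real.exp_ne_zero 1), Real.log_exp] at h1
      have h2 : s / Real.exp 1 ≤ 0.3678795 * s := by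
        rw [div_le_iff₀ (Real.exp_pos 1)]
        nlinarith [Real.exp_one_gt_d9, hs0.le]
      linarith
    have hxs : x ≤ 2.1233 * s := by
      have hlogr : Real.log r = 4 * Real.log s := by
        rw [← hsr, Real.log_pow]; norm_num
      have hl2 : (0.6931471803 : ℝ) < Real.log 2 := Real.log_two_gt_d9
      rw [hx, Real.logb, div_le_iff₀ (by linarith), hlogr]
      have h3 : (0.6931471803:ℝ) * s ≤ Real.log 2 * s :=
        mul_le_mul_of_nonneg_right hl2.le hs0.le
      linarith
    have hA : 3.67 * x + 0.28 ≤ 7.92 * s := by linarith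
    have hA0 : (0:ℝ) ≤ 3.67 * x + 0.28 := by linarith
    have hx1 : x + 1 ≤ 2.5753 * s := by linarith
    have hs5 : (53:ℝ) ≤ s ^ 5 := by
      have := pow_le_pow_left₀ (by norm_num : (0:ℝ) ≤ 2.213) hs 5
      have h53 : (53:ℝ) ≤ 2.213 ^ 5 := by norm_num
      linarith
    have key : (3.67 * x + 0.28) ^ 2 * (x + 1) ≤ 4 * s ^ 8 := by
      have h1 : (3.67 * x + 0.28) ^ 2 ≤ 62.7264 * s ^ 2 := by
        nlinarith [mul_self_le_mul_self hA0 hA]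
      have h2 : (3.67 * x + 0.28) ^ 2 * (x + 1) ≤ 62.7264 * s ^ 2 * (2.5753 * s) := by
        apply mul_le_mul h1 hx1 (by linarith) (by positivity)
      have h3 : (161.55 : ℝ) * s ^ 3 ≤ 4 * s ^ 8 := by
        nlinarith [pow_pos hs0 3, hs5]
      nlinarith
    have h6 : x + y ≤ (x + 1) * y := by nlinarith
    calc (3.67 * x + 0.28) ^ 2 * (x + y)
        ≤ (3.67 * x + 0.28) ^ 2 * ((x + 1) * y) :=
          mul_le_mul_of_nonneg_left h6 (sq_nonneg _)
      _ = ((3.67 * x + 0.28) ^ 2 * (x + 1)) * y := by ring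
      _ ≤ (4 * s ^ 8) * y := mul_le_mul_of_nonneg_right key (by linarith)
      _ = 4 * (r:ℝ) ^ 2 * y := by rw [← hsr]; ring
  · -- r ≤ 23
    rcases le_or_gt 11 r with h11 | h10
    · have hxu : x ≤ 4.53 := by
        have h1 : Real.logb 2 (r:ℝ) ≤ Real.logb 2 ((23:ℕ):ℝ) := by
          apply Real.logb_le_logb_of_le one_lt_two hr0
          exact_mod_cast Nat.lt_succ_iff.mp h23
        have h2 : Real.logb 2 ((23:ℕ):ℝ) ≤ (453:ℝ)/100 :=
          logb_le_of_pow (by norm_num) (by norm_num) (by decide)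
        rw [hx]; push_cast at h1 h2 ⊢; linarith
      have hrr : (11:ℝ) ≤ (r:ℝ) := by exact_mod_cast h11
      have hrr2 : (121:ℝ) ≤ (r:ℝ)^2 := by nlinarith
      have h1 : (3.67*x+0.28)^2 ≤ 285.8 := by
        nlinarith [mul_self_le_mul_self (by linarith : (0:ℝ) ≤ 3.67*x+0.28)
          (by linarith : 3.67*x+0.28 ≤ 16.9051)]
      have h2 : (3.67*x+0.28)^2*(x+y) ≤ 285.8*(x+y) :=
        mul_le_mul_of_nonneg_right h1 (by linarith)
      have h3 : 121*y ≤ (r:ℝ)^2*y := mul_le_mul_of_nonneg_right hrr2 (by linarith)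
      linarith
    · interval_cases r
      · have hxu : x ≤ 2.33 := by
          have := logb_le_of_pow (r := 5) (p := 233) (q := 100) (by norm_num) (by norm_num) (by norm_num)
          rw [hx]; push_cast at this ⊢; linarith
        have h1 : (3.67*x+0.28)^2 ≤ 78 := by
          nlinarith [mul_self_le_mul_self (by linarith : (0:ℝ) ≤ 3.67*x+0.28)
            (by linarith : 3.67*x+0.28 ≤ 3.67*2.33+0.28)]
        have h2 : (3.67*x+0.28)^2*(x+y) ≤ 78*(x+y) :=
          mul_le_mul_of_nonneg_right h1 (by linarith)
        push_cast
        linarith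
      · have hxu : x ≤ 2.59 := by
          have := logb_le_of_pow (r := 6) (p := 259) (q := 100) (by norm_num) (by norm_num) (by decide)
          rw [hx]; push_cast at this ⊢; linarith
        have h1 : (3.67*x+0.28)^2 ≤ 95.76 := by
          nlinarith [mul_self_le_mul_self (by linarith : (0:ℝ) ≤ 3.67*x+0.28)
            (by linarith : 3.67*x+0.28 ≤ 3.67*2.59+0.28)]
        have h2 : (3.67*x+0.28)^2*(x+y) ≤ 95.76*(x+y) :=
          mul_le_mul_of_nonneg_right h1 (by linarith)
        push_cast
        linarith
      · have hxu : x ≤ 2.81 := by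
          have := logb_le_of_pow (r := 7) (p := 281) (q := 100) (by norm_num) (by norm_num) (by decide)
          rw [hx]; push_cast at this ⊢; linarith
        have h1 : (3.67*x+0.28)^2 ≤ 112.21 := by
          nlinarith [mul_self_le_mul_self (by linarith : (0:ℝ) ≤ 3.67*x+0.28)
            (by linarith : 3.67*x+0.28 ≤ 3.67*2.81+0.28)]
        have h2 : (3.67*x+0.28)^2*(x+y) ≤ 112.21*(x+y) :=
          mul_le_mul_of_nonneg_right h1 (by linarith)
        push_cast
        linarith
      · have hxu : x ≤ 3 := by
          have := logb_le_of_pow (r := 8) (p := 3) (q := 1) (by norm_num) (by norm_num) (by norm_num)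
          rw [hx]; push_cast at this ⊢; linarith
        have h1 : (3.67*x+0.28)^2 ≤ 127.47 := by
          nlinarith [mul_self_le_mul_self (by linarith : (0:ℝ) ≤ 3.67*x+0.28)
            (by linarith : 3.67*x+0.28 ≤ 3.67*3+0.28)]
        have h2 : (3.67*x+0.28)^2*(x+y) ≤ 127.47*(x+y) :=
          mul_le_mul_of_nonneg_right h1 (by linarith)
        push_cast
        linarith
      · have hxu : x ≤ 3.18 := by
          have := logb_le_of_pow (r := 9) (p := 318) (q := 100) (by norm_num) (by norm_num) (by decide)
          rw [hx]; push_cast at this ⊢; linarith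
        have h1 : (3.67*x+0.28)^2 ≤ 142.82 := by
          nlinarith [mul_self_le_mul_self (by linarith : (0:ℝ) ≤ 3.67*x+0.28)
            (by linarith : 3.67*x+0.28 ≤ 3.67*3.18+0.28)]
        have h2 : (3.67*x+0.28)^2*(x+y) ≤ 142.82*(x+y) :=
          mul_le_mul_of_nonneg_right h1 (by linarith)
        push_cast
        linarith
      · have hxu : x ≤ 3.33 := by
          have := logb_le_of_pow (r := 10) (p := 333) (q := 100) (by norm_num) (by norm_num) (by decide)
          rw [hx]; push_cast at this ⊢; linarith
        have h1 : (3.67*x+0.28)^2 ≤ 156.28 := by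
          nlinarith [mul_self_le_mul_self (by linarith : (0:ℝ) ≤ 3.67*x+0.28)
            (by linarith : 3.67*x+0.28 ≤ 3.67*3.33+0.28)]
        have h2 : (3.67*x+0.28)^2*(x+y) ≤ 156.28*(x+y) :=
          mul_le_mul_of_nonneg_right h1 (by linarith)
        push_cast
        linarith

set_option maxHeartbeats 1000000 in
/-- The key analytic inequality in the inductive step: for `n ≥ 20604` and every
divisor `r` of `n` with `4 < r < n`, with `b' = 2/√π` and `c₀ = log₉(48·24^{1/3})`,
`(b'(n/r)/√(log₂(n/r)))·((1+c₀)log₂ r − (log₂ 24)/3) + 2(n/r)/√(log₂(n/r)) ≤ 2n/√(log₂ n)`. -/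
theorem stmt_11 (n r : ℕ) (hn : 20604 ≤ n) (hr : r ∣ n) (hr4 : 4 < r) (hrn : r < n) :
    (2 / Real.sqrt Real.pi) * ((n : ℝ) / r) / Real.sqrt (Real.logb 2 ((n : ℝ) / r)) *
        ((1 + Real.logb 9 (48 * (24 : ℝ) ^ ((1 : ℝ) / 3))) * Real.logb 2 r - Real.logb 2 24 / 3)
      + 2 * ((n : ℝ) / r) / Real.sqrt (Real.logb 2 ((n : ℝ) / r))
      ≤ 2 * n / Real.sqrt (Real.logb 2 n) := by
  obtain ⟨m, rfl⟩ := hr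
  have hrpos : 0 < r := by omega
  have hm2 : 2 ≤ m := by by_contra h; push_neg at h; interval_cases m <;> omega
  have hrR : (0:ℝ) < r := by exact_mod_cast hrpos
  have hmR : (2:ℝ) ≤ m := by exact_mod_cast hm2
  set x := Real.logb 2 (r:ℝ) with hxdef
  set y := Real.logb 2 (m:ℝ) with hydef
  set b := 2 / Real.sqrt Real.pi with hbdef
  set d := 1 + Real.logb 9 (48 * (24 : ℝ) ^ ((1 : ℝ) / 3)) with hddef
  set c := Real.logb 2 24 with hcdef
  have hM : ((r*m : ℕ):ℝ) / (r:ℝ) = (m:ℝ) := by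
    push_cast; field_simp
  have hxy : Real.logb 2 (((r*m : ℕ)):ℝ) = x + y := by
    push_cast
    rw [Real.logb_mul (by positivity) (by positivity)]
  have hy1 : (1:ℝ) ≤ y := by
    rw [hydef, show (1:ℝ) = Real.logb 2 2 from (Real.logb_self_eq_one one_lt_two).symm]
    exact Real.logb_le_logb_of_le one_lt_two (by norm_num) hmR
  have hx0 : (0:ℝ) ≤ x := Real.logb_nonneg one_lt_two (by exact_mod_cast hrpos)
  have hL : (14.3:ℝ) ≤ x + y := by
    have hA := le_logb_of_pow (n := 20604) (p := 143) (q := 10) (by norm_num) (by norm_num)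
      (by norm_num)
    have hB : Real.logb 2 ((20604:ℕ):ℝ) ≤ Real.logb 2 (((r*m:ℕ)):ℝ) :=
      Real.logb_le_logb_of_le one_lt_two (by norm_num) (by exact_mod_cast hn)
    rw [hxy] at hB
    push_cast at hA hB
    linarith
  have hsy : 0 < Real.sqrt y := Real.sqrt_pos.2 (by linarith)
  have hsxy : 0 < Real.sqrt (x+y) := Real.sqrt_pos.2 (by linarith)
  -- constant bounds
  have hb_ub : b ≤ 1.129 := b_ub
  have hb_lb : (1.128:ℝ) ≤ b := b_lb
  have hb0 : 0 ≤ b := by positivity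
  have hd_ub : d ≤ 3.25 := by rw [hddef]; linarith [c0_ub]
  have hd_lb : (1:ℝ) ≤ d := by rw [hddef]; linarith [c0_lb]
  have hc_lb : (4.58:ℝ) ≤ c := c_lb
  have hc_ub : c ≤ 4.6 := c_ub
  have hK : b * d ≤ 3.67 := by nlinarith
  have hK0 : 0 ≤ b * d := by positivity
  have hC_ub : 2 - b * c / 3 ≤ 0.28 := by nlinarith
  have hC0 : 0 ≤ 2 - b * c / 3 := by nlinarith
  -- key squared inequality
  have hKxC0 : 0 ≤ (b*d) * x + (2 - b*c/3) := by positivity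
  have hle : (b*d) * x + (2 - b*c/3) ≤ 3.67 * x + 0.28 := by
    nlinarith [mul_le_mul_of_nonneg_right hK hx0]
  have hcore := core r x y hxdef (by omega) hy1 hL
  have key2 : ((b*d) * x + (2 - b*c/3))^2 * (x+y) ≤ (2*(r:ℝ))^2 * y := by
    have hsq : ((b*d) * x + (2 - b*c/3))^2 ≤ (3.67 * x + 0.28)^2 := by
      nlinarith [mul_self_le_mul_self hKxC0 hle]
    calc ((b*d) * x + (2 - b*c/3))^2 * (x+y) ≤ (3.67 * x + 0.28)^2 * (x+y) :=
          mul_le_mul_of_nonneg_right hsq (by linarith)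
      _ ≤ 4 * (r:ℝ)^2 * y := hcore
      _ = (2*(r:ℝ))^2 * y := by ring
  have key : ((b*d) * x + (2 - b*c/3)) * Real.sqrt (x+y) ≤ 2*(r:ℝ) * Real.sqrt y := by
    have e1 : ((b*d) * x + (2 - b*c/3)) * Real.sqrt (x+y)
        = Real.sqrt (((b*d) * x + (2 - b*c/3))^2 * (x+y)) := by
      rw [Real.sqrt_mul (sq_nonneg _), Real.sqrt_sq hKxC0]
    have e2 : 2*(r:ℝ) * Real.sqrt y = Real.sqrt ((2*(r:ℝ))^2 * y) := by
      rw [Real.sqrt_mul (sq_nonneg _), Real.sqrt_sq (by positivity)]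
    rw [e1, e2]
    exact Real.sqrt_le_sqrt key2
  -- final assembly
  rw [hM, hxy]
  push_cast
  rw [show Real.logb 2 ((m:ℝ)) = y from rfl]
  have eq1 : b * (m:ℝ) / Real.sqrt y * (d * x - c / 3) + 2 * (m:ℝ) / Real.sqrt y
      = (m:ℝ) * ((b*d) * x + (2 - b*c/3)) / Real.sqrt y := by
    field_simp
    ring
  rw [eq1, div_le_div_iff₀ hsy hsxy]
  have hm0 : (0:ℝ) ≤ (m:ℝ) := by linarith
  have := mul_le_mul_of_nonneg_left key hm0
  nlinarith [this]
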